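/- arXiv:2210.04110 — 3 statements merged into one kernel-verified Lean document; each statement's English description precedes it below -/
import Mathlib

section
/- Let $g(\delta) = 1 - \frac{(1+\epsilon_0+\delta) - \sqrt{(1+\epsilon_0+\delta)^2 - 4\epsilon_0}}{2}$ for $\delta \in (0,1]$ and $0 < \epsilon_0 < 1$. Then $\inf_{\delta \in (0,1]} g(\delta) = 1 - \epsilon_0 > 0$; in particular $\lim_{\delta \downarrow 0} g(\delta) = 1 - \epsilon_0$, which is strictly greater than $0$. -/
/-! The discriminant exceeds `(1 - ε₀ + δ) ^ 2` by `4 ε₀ δ ≥ 0`, so `g δ ≥ 1 - ε₀` for `δ ≥ 0`,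
with equality at `δ = 0`; as `g` is continuous, the infimum over `(0, 1]` is the one-sided
limit `g 0 = 1 - ε₀`. -/

open Filter Set Topology

theorem csInf_image_Ioc_eq_of_continuousWithinAt {f : ℝ → ℝ} {a b : ℝ} (hab : a < b)
    (hf : ContinuousWithinAt f (Ioi a) a) (hle : ∀ x ∈ Ioc a b, f a ≤ f x) :
    sInf (f '' Ioc a b) = f a := by
  refine IsGLB.csInf_eq ⟨?_, fun c hc => ?_⟩ ⟨f b, b, right_mem_Ioc.mpr hab, rfl⟩
  · rintro _ ⟨x, hx, rfl⟩
    exact hle x hx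
  · refine ge_of_tendsto hf ?_
    filter_upwards [Ioc_mem_nhdsGT hab] with x hx
    exact hc ⟨x, hx, rfl⟩

theorem sub_add_le_sqrt_sq_sub {ε δ : ℝ} (hε : 0 ≤ ε) (hδ : 0 ≤ δ) :
    1 - ε + δ ≤ √((1 + ε + δ) ^ 2 - 4 * ε) :=
  Real.le_sqrt_of_sq_le (by nlinarith [mul_nonneg hε hδ])

theorem sqrt_one_add_sq_sub (ε : ℝ) (hε : ε ≤ 1) : √((1 + ε) ^ 2 - 4 * ε) = 1 - ε := by
  rw [show (1 + ε) ^ 2 - 4 * ε = (1 - ε) ^ 2 by ring, Real.sqrt_sq (by linarith)]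

theorem stmt3 (ε₀ : ℝ) (h0 : 0 < ε₀) (h1 : ε₀ < 1) :
    let g : ℝ → ℝ := fun δ =>
      1 - ((1 + ε₀ + δ) - Real.sqrt ((1 + ε₀ + δ) ^ 2 - 4 * ε₀)) / 2
    sInf (g '' Set.Ioc (0 : ℝ) 1) = 1 - ε₀ ∧
      Filter.Tendsto g (nhdsWithin 0 (Set.Ioi 0)) (nhds (1 - ε₀)) ∧
      (1 - ε₀ : ℝ) > 0 := by
  intro g
  have hg0 : g 0 = 1 - ε₀ := by
    simp only [g, add_zero, sqrt_one_add_sq_sub ε₀ h1.le]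
    ring
  have hcont : ContinuousWithinAt g (Ioi 0) 0 := by
    apply Continuous.continuousWithinAt
    fun_prop
  have hle : ∀ δ ∈ Ioc (0 : ℝ) 1, g 0 ≤ g δ := by
    rintro δ ⟨hδ0, -⟩
    have := sub_add_le_sqrt_sq_sub h0.le hδ0.le
    simp only [g, hg0]
    linarith
  refine ⟨hg0 ▸ csInf_image_Ioc_eq_of_continuousWithinAt one_pos hcont hle, ?_, by linarith⟩
  exact hg0 ▸ hcont.tendsto
end

section
/- In the 'following the majority' game with $n$ states, for each $k \in \{1,\dots,n\}$ the pair $(\pi, L)$ defined by $\pi_t(j|i) = \mathbb{1}\{j=k\}$ for all $t$, $L_0(i,j) = \mu_0(i)\mathbb{1}\{j=k\}$ and $L_t(i,j) = \mathbb{1}\{i=k, j=k\}$ for $t \ge 1$, is a Nash equilibrium (a $0$-Nash equilibrium): $\pi$ attains the value $V^f(L) = \sum_{t=1}^T r^k \cdot 1$ given flow $L$, and $L$ is consistent with all players using $\pi$. -/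
open Finset

noncomputable section

/-- State-action distribution at each time induced by a randomized Markov policy in the
"following the majority" game, where transitions are deterministic: `s_{t+1} = a_t`. -/
def majDist (n : ℕ) (μ0 : Fin n → ℝ) (π : ℕ → Fin n → Fin n → ℝ) :
    ℕ → Fin n → Fin n → ℝ
  | 0, s, a => μ0 s * π 0 s a
  | (t + 1), s, a =>
      (∑ s' : Fin n, ∑ a' : Fin n,
        majDist n μ0 π t s' a' * (if s = a' then 1 else 0)) * π (t + 1) s a

/-- Reward of the "following the majority" game: zero at time `0`, and at `t ≥ 1` a player at
state `i` taking action `j` receives `1_{i=j} (r i - r i ‖L - e_{i,i}‖₂² / 2)`. -/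
def majRew (n : ℕ) (r : Fin n → ℝ) (t : ℕ) (i j : Fin n)
    (L : Fin n → Fin n → ℝ) : ℝ :=
  if t = 0 then 0 else
    (if i = j then 1 else 0) *
      (r i - r i * (∑ p : Fin n, ∑ q : Fin n,
        (L p q - (if p = i ∧ q = i then 1 else 0)) ^ 2) / 2)

/-- Total expected reward of a representative player using policy `π` against the
population flow `L` over the horizon `{0, …, T}`. -/
def majTotal (n : ℕ) (r : Fin n → ℝ) (T : ℕ) (μ0 : Fin n → ℝ)
    (π : ℕ → Fin n → Fin n → ℝ) (L : ℕ → Fin n → Fin n → ℝ) : ℝ :=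
  ∑ t ∈ Finset.range (T + 1), ∑ s : Fin n, ∑ a : Fin n,
    majDist n μ0 π t s a * majRew n r t s a (L t)

/-! Under "always play `k`" every player sits at `k` from time `1` on, so the flow is the point
mass at `(k, k)` and the policy collects `r k` per step. Against that flow, staying at a state
`i ≠ k` pays `r i (1 - ‖e_{k,k} - e_{i,i}‖² / 2) = 0` and moving pays nothing, so no policy earns
more than `r k ≥ 0` per step. -/

def constPolicy {n : ℕ} (k : Fin n) : ℕ → Fin n → Fin n → ℝ :=
  fun _ _ j => if j = k then 1 else 0

section Distribution

variable {n : ℕ} {μ0 : Fin n → ℝ} {π : ℕ → Fin n → Fin n → ℝ}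

lemma majDist_succ (t : ℕ) (s a : Fin n) :
    majDist n μ0 π (t + 1) s a = (∑ s', majDist n μ0 π t s' s) * π (t + 1) s a := by
  simp [majDist]

lemma majDist_nonneg (hμ0 : ∀ i, 0 ≤ μ0 i) (hπ : ∀ t s a, 0 ≤ π t s a) :
    ∀ t s a, 0 ≤ majDist n μ0 π t s a
  | 0, s, a => mul_nonneg (hμ0 s) (hπ 0 s a)
  | t + 1, s, a => by
    rw [majDist_succ]
    exact mul_nonneg (sum_nonneg fun s' _ => majDist_nonneg hμ0 hπ t s' s) (hπ _ s a)

lemma sum_majDist (hμ0sum : ∑ i, μ0 i = 1) (hπ : ∀ t s, ∑ a, π t s a = 1) :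
    ∀ t, ∑ s, ∑ a, majDist n μ0 π t s a = 1
  | 0 => by simp only [majDist, ← mul_sum, hπ, mul_one, hμ0sum]
  | t + 1 => by
    simp only [majDist_succ, ← mul_sum, hπ, mul_one]
    rw [sum_comm]
    exact sum_majDist hμ0sum hπ t

lemma majDist_constPolicy_of_ne {k a : Fin n} (ha : a ≠ k) (t : ℕ) (s : Fin n) :
    majDist n μ0 (constPolicy k) t s a = 0 := by
  cases t with
  | zero => simp [majDist, constPolicy, ha]
  | succ t => simp [majDist_succ, constPolicy, ha]

lemma sum_majDist_constPolicy (hμ0sum : ∑ i, μ0 i = 1) (k : Fin n) (t : ℕ) (s : Fin n) :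
    ∑ s', majDist n μ0 (constPolicy k) t s' s = if s = k then 1 else 0 := by
  split_ifs with hs
  · subst hs
    rw [← sum_majDist (π := constPolicy s) hμ0sum (fun _ _ => by simp [constPolicy]) t]
    exact sum_congr rfl fun s' _ =>
      (Fintype.sum_eq_single s fun a ha => majDist_constPolicy_of_ne ha t s').symm
  · exact sum_eq_zero fun s' _ => majDist_constPolicy_of_ne hs t s'

lemma majDist_constPolicy_succ (hμ0sum : ∑ i, μ0 i = 1) (k : Fin n) (t : ℕ) (s a : Fin n) :
    majDist n μ0 (constPolicy k) (t + 1) s a = if s = k ∧ a = k then 1 else 0 := by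
  rw [majDist_succ, sum_majDist_constPolicy hμ0sum, constPolicy, ite_zero_mul_ite_zero, mul_one]

end Distribution

lemma sum_sq_pointMass_sub_pointMass {ι : Type*} [Fintype ι] [DecidableEq ι] {i k : ι}
    (h : i ≠ k) :
    ∑ p, ∑ q, ((if p = k ∧ q = k then (1 : ℝ) else 0) - if p = i ∧ q = i then 1 else 0) ^ 2
      = 2 := by
  have hsq : ∀ p q : ι,
      ((if p = k ∧ q = k then (1 : ℝ) else 0) - if p = i ∧ q = i then 1 else 0) ^ 2 =
        (if p = k ∧ q = k then 1 else 0) + if p = i ∧ q = i then 1 else 0 := by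
    intro p q
    split_ifs with hk hi
    · exact absurd (hi.1.symm.trans hk.1) h
    all_goals norm_num
  simp only [hsq]
  simp [sum_add_distrib, ite_and, one_add_one_eq_two]

lemma majRew_pointMass {n : ℕ} (r : Fin n → ℝ) {t : ℕ} (ht : t ≠ 0) (k s a : Fin n) :
    majRew n r t s a (fun i j => if i = k ∧ j = k then 1 else 0) =
      if s = k ∧ a = k then r k else 0 := by
  rw [majRew, if_neg ht]
  by_cases hs : s = k
  · subst hs
    simp [eq_comm]
  · rw [sum_sq_pointMass_sub_pointMass hs]
    simp [hs]

section Total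

variable {n : ℕ} (r : Fin n → ℝ) (T : ℕ) (μ0 : Fin n → ℝ) (π L : ℕ → Fin n → Fin n → ℝ)

lemma majTotal_eq_sum_succ :
    majTotal n r T μ0 π L = ∑ t ∈ range T, ∑ s, ∑ a,
      majDist n μ0 π (t + 1) s a * majRew n r (t + 1) s a (L (t + 1)) := by
  simp [majTotal, sum_range_succ', majRew]

variable {r T μ0 π L}

lemma majTotal_le_of_majRew_le (hμ0 : ∀ i, 0 ≤ μ0 i) (hμ0sum : ∑ i, μ0 i = 1)
    (hπ : ∀ t s, (∀ a, 0 ≤ π t s a) ∧ ∑ a, π t s a = 1) {c : ℝ}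
    (hc : ∀ t s a, majRew n r (t + 1) s a (L (t + 1)) ≤ c) :
    majTotal n r T μ0 π L ≤ T * c := by
  have hdist := majDist_nonneg hμ0 fun t s => (hπ t s).1
  rw [majTotal_eq_sum_succ]
  calc _ ≤ ∑ t ∈ range T, ∑ s, ∑ a, majDist n μ0 π (t + 1) s a * c := by
        gcongr with t _ s _ a _
        · exact hdist _ s a
        · exact hc t s a
    _ = T * c := by simp [← sum_mul, sum_majDist hμ0sum fun t s => (hπ t s).2]

end Total

theorem stmt13_general (n T : ℕ) (r : Fin n → ℝ) (hr : ∀ i, 0 < r i)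
    (μ0 : Fin n → ℝ) (hμ0 : ∀ i, 0 ≤ μ0 i) (hμ0sum : ∑ i, μ0 i = 1) (k : Fin n) :
    let π : ℕ → Fin n → Fin n → ℝ := fun _ _ j => if j = k then 1 else 0
    let L : ℕ → Fin n → Fin n → ℝ := fun t i j =>
      if t = 0 then μ0 i * (if j = k then 1 else 0)
      else (if i = k ∧ j = k then 1 else 0)
    -- `π` is optimal against the flow `L` (a `0`-Nash equilibrium condition) …
    (∀ π' : ℕ → Fin n → Fin n → ℝ,
        (∀ t s, (∀ a, 0 ≤ π' t s a) ∧ ∑ a, π' t s a = 1) →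
        majTotal n r T μ0 π' L ≤ majTotal n r T μ0 π L) ∧
      -- … attaining the value `V^f(L) = ∑_{t=1}^T r^k`
      majTotal n r T μ0 π L = (T : ℝ) * r k ∧
      -- and `L` is consistent with all players using `π`
      (∀ t, t ≤ T → ∀ s a, majDist n μ0 π t s a = L t s a) := by
  intro π L
  have hπ : π = constPolicy k := rfl
  have hrew : ∀ t s a, majRew n r (t + 1) s a (L (t + 1)) = if s = k ∧ a = k then r k else 0 :=
    fun t => majRew_pointMass r t.succ_ne_zero k
  have hcons : ∀ t s a, majDist n μ0 π t s a = L t s a := by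
    rintro (_ | t) s a
    · rfl
    · rw [hπ, majDist_constPolicy_succ hμ0sum]
      rfl
  have hval : majTotal n r T μ0 π L = T * r k := by
    rw [majTotal_eq_sum_succ, hπ]
    simp [majDist_constPolicy_succ hμ0sum, hrew, ite_and]
  refine ⟨fun π' hπ' => hval ▸ majTotal_le_of_majRew_le hμ0 hμ0sum hπ' fun t s a => ?_, hval,
    fun t _ => hcons t⟩
  rw [hrew]
  split_ifs <;> linarith [hr k]

theorem stmt13 (n T : ℕ) (hn : 0 < n) (r : Fin n → ℝ) (hr : ∀ i, 0 < r i)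
    (μ0 : Fin n → ℝ) (hμ0 : ∀ i, 0 ≤ μ0 i) (hμ0sum : ∑ i, μ0 i = 1) (k : Fin n) :
    let π : ℕ → Fin n → Fin n → ℝ := fun _ _ j => if j = k then 1 else 0
    let L : ℕ → Fin n → Fin n → ℝ := fun t i j =>
      if t = 0 then μ0 i * (if j = k then 1 else 0)
      else (if i = k ∧ j = k then 1 else 0)
    -- `π` is optimal against the flow `L` (a `0`-Nash equilibrium condition) …
    (∀ π' : ℕ → Fin n → Fin n → ℝ,
        (∀ t s, (∀ a, 0 ≤ π' t s a) ∧ ∑ a, π' t s a = 1) →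
        majTotal n r T μ0 π' L ≤ majTotal n r T μ0 π L) ∧
      -- … attaining the value `V^f(L) = ∑_{t=1}^T r^k`
      majTotal n r T μ0 π L = (T : ℝ) * r k ∧
      -- and `L` is consistent with all players using `π`
      (∀ t, t ≤ T → ∀ s a, majDist n μ0 π t s a = L t s a) :=
  stmt13_general n T r hr μ0 hμ0 hμ0sum k

end
end

section
/- (Policy reconstruction) Let $d_t(s,a) \ge 0$ satisfy the flow constraints of a finite-horizon MDP with transitions $P_t$, initial distribution $\mu_0$, and define $\mu_t(s) = \sum_a d_t(s,a)$ and $\pi_t(a|s) = d_t(s,a)/\mu_t(s)$ when $\mu_t(s) > 0$ (arbitrary probability vector otherwise). Then the state-action distribution of the Markov chain started at $\mu_0$, using policy $\pi$, with transitions $P_t$, equals $d_t$: $\mathbb{P}^\pi(s_t = s, a_t = a) = d_t(s,a)$ for all $t, s, a$. -/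
/-!
Where `μ_t(s) = ∑_a d_t(s,a)` is positive, `d_t(s,a) = μ_t(s) π_t(a|s)` by the definition of `π`;
where it vanishes, nonnegativity forces `d_t(s,·) = 0` and the identity holds for any `π`.
So `d` obeys the same recursion as the law of the chain: its state marginal at time `0` is `μ₀`
and, by the flow constraints, at time `t + 1` it is the image of `d_t` under `P_t`.
-/

noncomputable section

/-- State-action distribution of the time-inhomogeneous Markov chain started at `μ0`,
using randomized Markov policy `π`, with transition kernels `P`. -/
def mdpDist (S A : ℕ) (μ0 : Fin S → ℝ) (P : ℕ → Fin S → Fin A → Fin S → ℝ)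
    (π : ℕ → Fin S → Fin A → ℝ) : ℕ → Fin S → Fin A → ℝ
  | 0, s, a => μ0 s * π 0 s a
  | (t + 1), s, a =>
      (∑ s' : Fin S, ∑ a' : Fin A, mdpDist S A μ0 P π t s' a' * P t s' a' s) *
        π (t + 1) s a

theorem sum_mul_eq_of_eq_div_sum {ι : Type*} [Fintype ι] {f p : ι → ℝ} {i : ι}
    (hf : ∀ j, 0 ≤ f j) (hp : 0 < ∑ j, f j → p i = f i / ∑ j, f j) :
    (∑ j, f j) * p i = f i := by
  rcases (Finset.sum_nonneg fun j _ => hf j).lt_or_eq with hpos | hzero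
  · rw [hp hpos, mul_div_cancel₀ _ hpos.ne']
  · have hfi : f i = 0 :=
      (Finset.sum_eq_zero_iff_of_nonneg fun j _ => hf j).mp hzero.symm i (Finset.mem_univ i)
    rw [← hzero, hfi, zero_mul]

theorem mdpDist_eq_of_recurrence {S A : ℕ} {μ0 : Fin S → ℝ} {P : ℕ → Fin S → Fin A → Fin S → ℝ}
    {π : ℕ → Fin S → Fin A → ℝ} {d : ℕ → Fin S → Fin A → ℝ}
    (h0 : ∀ s a, d 0 s a = μ0 s * π 0 s a)
    (hsucc : ∀ t s a,
      d (t + 1) s a = (∑ s', ∑ a', d t s' a' * P t s' a' s) * π (t + 1) s a) :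
    ∀ t s a, mdpDist S A μ0 P π t s a = d t s a := by
  intro t
  induction t with
  | zero => exact fun s a => (h0 s a).symm
  | succ t ih =>
    intro s a
    simp only [mdpDist, ih, hsucc]

theorem stmt16_general (S A : ℕ) (d : ℕ → Fin S → Fin A → ℝ) (μ0 : Fin S → ℝ)
    (P : ℕ → Fin S → Fin A → Fin S → ℝ) (π : ℕ → Fin S → Fin A → ℝ)
    (hd : ∀ t s a, 0 ≤ d t s a)
    (hinit : ∀ s, ∑ a, d 0 s a = μ0 s)
    (hflow : ∀ t s', ∑ a', d (t + 1) s' a' = ∑ s, ∑ a, d t s a * P t s a s')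
    (hπdef : ∀ t s a, 0 < (∑ a', d t s a') →
      π t s a = d t s a / ∑ a', d t s a') :
    ∀ t s a, mdpDist S A μ0 P π t s a = d t s a := by
  have hfactor : ∀ t s a, (∑ a', d t s a') * π t s a = d t s a :=
    fun t s a => sum_mul_eq_of_eq_div_sum (hd t s) (hπdef t s a)
  refine mdpDist_eq_of_recurrence (fun s a => ?_) (fun t s a => ?_)
  · rw [← hinit, hfactor]
  · rw [← hflow, hfactor]

theorem stmt16 (S A : ℕ) (d : ℕ → Fin S → Fin A → ℝ) (μ0 : Fin S → ℝ)
    (P : ℕ → Fin S → Fin A → Fin S → ℝ) (π : ℕ → Fin S → Fin A → ℝ)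
    (hd : ∀ t s a, 0 ≤ d t s a)
    (hinit : ∀ s, ∑ a, d 0 s a = μ0 s)
    (hflow : ∀ t s', ∑ a', d (t + 1) s' a' = ∑ s, ∑ a, d t s a * P t s a s')
    (hπprob : ∀ t s, (∀ a, 0 ≤ π t s a) ∧ ∑ a, π t s a = 1)
    (hπdef : ∀ t s a, 0 < (∑ a', d t s a') →
      π t s a = d t s a / ∑ a', d t s a') :
    ∀ t s a, mdpDist S A μ0 P π t s a = d t s a :=
  stmt16_general S A d μ0 P π hd hinit hflow hπdef

end
end
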